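/- Along any solution of the plankton Hamiltonian system, the quantity γ(p(t) − 1)² q(t) is constant, equal to its initial value H = γ(p(0) − 1)² q(0). Moreover, if 0 ≤ p(0) < 1 and q(0) > 0 (so H > 0), then q(t) = (√q(0) − √(γH) t)² for all t in the maximal existence interval [0, 1/(γ(1 − p(0)))), and at the time t_e = √(q(0)/(γH)) − 1/γ one has p(t_e) = 0 and q(t_e) = H/γ. -/

import Mathlib

/-!
The Hamiltonian `γ (p - 1)² q` has zero derivative along solutions, so it is constant, equal to
`H > 0`; in particular `p` never reaches `1`. The `p`-equation is then a Riccati equation for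
`1 - p`, which linearises under inversion: `(1 - p t)⁻¹ = (1 - p 0)⁻¹ - γ t`. Conservation of `H`
turns this into `q t = H / γ · ((1 - p 0)⁻¹ - γ t)²`, which is the stated square, and `p` vanishes
exactly when `(1 - p t)⁻¹ = 1`, i.e. at `t_e = ((1 - p 0)⁻¹ - 1) / γ`.
-/

open Set

theorem Convex.eq_of_forall_hasDerivWithinAt_zero {E : Type*} [NormedAddCommGroup E]
    [NormedSpace ℝ E] {f : ℝ → E} {s : Set ℝ} (hs : Convex ℝ s)
    (hf : ∀ x ∈ s, HasDerivWithinAt f 0 s x) {x y : ℝ} (hx : x ∈ s) (hy : y ∈ s) :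
    f y = f x := by
  simpa [sub_eq_zero] using
    hs.norm_image_sub_le_of_norm_hasDerivWithin_le hf (C := 0) (fun _ _ => by simp) hx hy

def IsPlanktonSolution (γ : ℝ) (p q : ℝ → ℝ) (s : Set ℝ) : Prop :=
  ∀ t ∈ s, HasDerivWithinAt p (-γ * (p t - 1) ^ 2) s t ∧
    HasDerivWithinAt q (2 * γ * (p t - 1) * q t) s t

namespace Plankton

variable {γ : ℝ} {p q : ℝ → ℝ} {s : Set ℝ}

theorem hasDerivWithinAt_inv_one_sub {t : ℝ} (hp : HasDerivWithinAt p (-γ * (p t - 1) ^ 2) s t)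
    (hpt : p t ≠ 1) : HasDerivWithinAt (fun u => (1 - p u)⁻¹) (-γ) s t := by
  refine ((hp.const_sub 1).inv (sub_ne_zero.2 hpt.symm)).congr_deriv ?_
  field_simp
  ring

theorem hasDerivWithinAt_hamiltonian {t : ℝ} (hp : HasDerivWithinAt p (-γ * (p t - 1) ^ 2) s t)
    (hq : HasDerivWithinAt q (2 * γ * (p t - 1) * q t) s t) :
    HasDerivWithinAt (fun u => γ * (p u - 1) ^ 2 * q u) 0 s t := by
  refine ((((hp.sub_const 1).pow 2).const_mul γ).mul hq).congr_deriv ?_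
  simp only [Nat.cast_ofNat, Nat.add_one_sub_one, pow_one, Pi.pow_apply]
  ring

section Conservation

variable {x y : ℝ} (hs : Convex ℝ s) (hx : x ∈ s) (hy : y ∈ s)
include hs hx hy

theorem inv_one_sub_eq (hp : ∀ t ∈ s, HasDerivWithinAt p (-γ * (p t - 1) ^ 2) s t)
    (hp1 : ∀ t ∈ s, p t ≠ 1) : (1 - p y)⁻¹ = (1 - p x)⁻¹ - γ * (y - x) := by
  have hder : ∀ t ∈ s, HasDerivWithinAt (fun u => (1 - p u)⁻¹ + γ * u) 0 s t := fun t ht => by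
    refine ((hasDerivWithinAt_inv_one_sub (hp t ht) (hp1 t ht)).add
      ((hasDerivWithinAt_id t s).const_mul γ)).congr_deriv ?_
    simp
  linear_combination hs.eq_of_forall_hasDerivWithinAt_zero hder hx hy

theorem hamiltonian_eq (hsol : IsPlanktonSolution γ p q s) :
    γ * (p y - 1) ^ 2 * q y = γ * (p x - 1) ^ 2 * q x :=
  hs.eq_of_forall_hasDerivWithinAt_zero
    (fun t ht => hasDerivWithinAt_hamiltonian (hsol t ht).1 (hsol t ht).2) hx hy

theorem inv_one_sub_eq_and_q_eq (hsol : IsPlanktonSolution γ p q s)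
    (hH : γ * (p x - 1) ^ 2 * q x ≠ 0) :
    (1 - p y)⁻¹ = (1 - p x)⁻¹ - γ * (y - x) ∧
      q y = (1 - p x) ^ 2 * q x * ((1 - p x)⁻¹ - γ * (y - x)) ^ 2 := by
  have hp1 : ∀ t ∈ s, p t ≠ 1 := fun t ht h => hH <| by
    simpa [h] using (hamiltonian_eq hs hx ht hsol).symm
  have hinv := inv_one_sub_eq hs hx hy (fun t ht => (hsol t ht).1) hp1
  refine ⟨hinv, ?_⟩
  have hγ : γ ≠ 0 := by rintro rfl; simp at hH
  have hpy : 1 - p y ≠ 0 := sub_ne_zero.2 (hp1 y hy).symm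
  have hcons : (p y - 1) ^ 2 * q y = (p x - 1) ^ 2 * q x := by
    simpa only [mul_assoc, mul_right_inj' hγ] using hamiltonian_eq hs hx hy hsol
  rw [← hinv]
  field_simp
  linear_combination hcons

end Conservation

theorem sqrt_mul_hamiltonian {a : ℝ} (hγ : 0 ≤ γ) (ha : 0 ≤ a) (c : ℝ) :
    √(γ * (γ * a ^ 2 * c)) = γ * a * √c := by
  rw [show γ * (γ * a ^ 2 * c) = (γ * a) ^ 2 * c by ring, Real.sqrt_mul (by positivity),
    Real.sqrt_sq (by positivity)]

theorem sqrt_div_mul_hamiltonian {a c : ℝ} (hγ : 0 < γ) (ha : 0 < a) (hc : 0 < c) :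
    √(c / (γ * (γ * a ^ 2 * c))) = a⁻¹ / γ := by
  rw [show c / (γ * (γ * a ^ 2 * c)) = (a⁻¹ / γ) ^ 2 by field_simp, Real.sqrt_sq (by positivity)]

theorem extinction_time_mem_Ico {a : ℝ} (hγ : 0 < γ) (ha0 : 0 < a) (ha1 : a ≤ 1) :
    (a⁻¹ - 1) / γ ∈ Ico 0 (1 / (γ * a)) := by
  have : 1 ≤ a⁻¹ := (one_le_inv₀ ha0).2 ha1
  refine ⟨div_nonneg (by linarith) hγ.le, ?_⟩
  calc (a⁻¹ - 1) / γ < a⁻¹ / γ := by gcongr; linarith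
    _ = 1 / (γ * a) := by field_simp

end Plankton

open Plankton



theorem plankton_extinction_trajectory (γ : ℝ) (hγ : 0 < γ) (p q : ℝ → ℝ)
    (hp0 : 0 ≤ p 0) (hp01 : p 0 < 1) (hq0 : 0 < q 0)
    (H : ℝ) (hH : H = γ * (p 0 - 1) ^ 2 * q 0)
    (I : Set ℝ) (hI : I = Set.Ico 0 (1 / (γ * (1 - p 0))))
    (hsol : ∀ t ∈ I,
      HasDerivWithinAt p (-γ * (p t - 1) ^ 2) I t ∧
      HasDerivWithinAt q (2 * γ * (p t - 1) * q t) I t) :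
    0 < H ∧
    (∀ t ∈ I, γ * (p t - 1) ^ 2 * q t = H) ∧
    (∀ t ∈ I, q t = (Real.sqrt (q 0) - Real.sqrt (γ * H) * t) ^ 2) ∧
    Real.sqrt (q 0 / (γ * H)) - 1 / γ ∈ I ∧
    p (Real.sqrt (q 0 / (γ * H)) - 1 / γ) = 0 ∧
    q (Real.sqrt (q 0 / (γ * H)) - 1 / γ) = H / γ := by
  have h1p : 0 < 1 - p 0 := by linarith
  have hHpos : 0 < H := by rw [hH, ← neg_sub, neg_sq]; positivity
  have hconv : Convex ℝ I := hI ▸ convex_Ico _ _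
  have h0 : (0 : ℝ) ∈ I := hI ▸ ⟨le_rfl, by positivity⟩
  have hcons : ∀ t ∈ I, γ * (p t - 1) ^ 2 * q t = H := fun t ht =>
    hH ▸ hamiltonian_eq hconv h0 ht hsol
  have hsolved : ∀ t ∈ I, (1 - p t)⁻¹ = (1 - p 0)⁻¹ - γ * t ∧
      q t = (1 - p 0) ^ 2 * q 0 * ((1 - p 0)⁻¹ - γ * t) ^ 2 := fun t ht => by
    simpa only [sub_zero] using inv_one_sub_eq_and_q_eq hconv h0 ht hsol (hH ▸ hHpos.ne')
  replace hH : H = γ * (1 - p 0) ^ 2 * q 0 := by rw [hH]; ring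
  have hte : √(q 0 / (γ * H)) - 1 / γ = ((1 - p 0)⁻¹ - 1) / γ := by
    rw [hH, sqrt_div_mul_hamiltonian hγ h1p hq0]
    ring
  have hteI : ((1 - p 0)⁻¹ - 1) / γ ∈ I := hI ▸ extinction_time_mem_Ico hγ h1p (by linarith)
  have hte1 : (1 - p (((1 - p 0)⁻¹ - 1) / γ))⁻¹ = 1 := by
    rw [(hsolved _ hteI).1]
    field_simp
    ring
  refine ⟨hHpos, hcons, fun t ht => ?_, hte ▸ hteI, ?_, ?_⟩
  · rw [(hsolved t ht).2, hH, sqrt_mul_hamiltonian hγ.le h1p.le, show √(q 0) -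
      γ * (1 - p 0) * √(q 0) * t = √(q 0) * (1 - γ * (1 - p 0) * t) by ring, mul_pow,
      Real.sq_sqrt hq0.le]
    field_simp
  · rw [hte]
    linarith [inv_eq_one.1 hte1]
  · rw [hte, (hsolved _ hteI).2, ← (hsolved _ hteI).1, hte1, hH]
    field_simp
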